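/- Let M be a finite-dimensional representation of a finite quiver Q. Then q_Q(dim M) = dim End_Q(M) - dim Ext^1_Q(M,M), where q_Q(n) = ⟨n,n⟩_Q is the Tits form. -/

import Mathlib

/-- A finite quiver: finite sets of vertices and arrows with source and target maps. -/
structure FinQuiver where
  V : Type
  A : Type
  fv : Fintype V
  fa : Fintype A
  dv : DecidableEq V
  da : DecidableEq A
  s : A → V
  t : A → V

attribute [instance] FinQuiver.fv FinQuiver.fa FinQuiver.dv FinQuiver.da

/-- A finite-dimensional complex representation of a finite quiver: a finite
vector space `ℂ^{carrier i}` at each vertex and a matrix for each arrow. -/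
structure QRep (Q : FinQuiver) where
  carrier : Q.V → Type
  fc : ∀ i, Fintype (carrier i)
  dc : ∀ i, DecidableEq (carrier i)
  mat : ∀ a : Q.A, Matrix (carrier (Q.t a)) (carrier (Q.s a)) ℂ

attribute [instance] QRep.fc QRep.dc

/-- The map `c_{M,N} : ⊕_i Hom(V_i, W_i) → ⊕_α Hom(V_{sα}, W_{tα})`,
`(φ_i) ↦ (φ_{tα} f_α - g_α φ_{sα})_α` from the Ringel exact sequence. -/
noncomputable def cmap {Q : FinQuiver} (M N : QRep Q) :
    (∀ i, Matrix (N.carrier i) (M.carrier i) ℂ) →ₗ[ℂ]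
      (∀ a : Q.A, Matrix (N.carrier (Q.t a)) (M.carrier (Q.s a)) ℂ) where
  toFun φ := fun a => φ (Q.t a) * M.mat a - N.mat a * φ (Q.s a)
  map_add' φ ψ := by
    funext a
    simp only [Pi.add_apply, Matrix.add_mul, Matrix.mul_add]
    abel
  map_smul' c φ := by
    funext a
    simp [Matrix.smul_mul, Matrix.mul_smul, smul_sub]

/-- `Hom_Q(M,N)`, the space of quiver representation homomorphisms, as the
kernel of `c_{M,N}`. -/
noncomputable def homSpace {Q : FinQuiver} (M N : QRep Q) :
    Submodule ℂ (∀ i, Matrix (N.carrier i) (M.carrier i) ℂ) :=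
  LinearMap.ker (cmap M N)

/-- `Ext¹_Q(M,N)`, computed as the cokernel of `c_{M,N}` (Ringel exact sequence). -/
noncomputable abbrev extSpace {Q : FinQuiver} (M N : QRep Q) :=
  (∀ a : Q.A, Matrix (N.carrier (Q.t a)) (M.carrier (Q.s a)) ℂ) ⧸
    LinearMap.range (cmap M N)


/-- The Euler form of a finite quiver. -/
def eulerForm (Q : FinQuiver) (m n : Q.V → ℤ) : ℤ :=
  (∑ i, m i * n i) - ∑ a, m (Q.s a) * n (Q.t a)

/-- The Tits form `q_Q(n) = ⟨n,n⟩_Q`. -/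
def titsForm (Q : FinQuiver) (n : Q.V → ℤ) : ℤ :=
  eulerForm Q n n

/-- The dimension vector of a representation. -/
def dimVec {Q : FinQuiver} (M : QRep Q) : Q.V → ℤ :=
  fun i => (Fintype.card (M.carrier i) : ℤ)

/-!
In the Ringel sequence, `Hom_Q(M,N)` and `Ext¹_Q(M,N)` are the kernel and cokernel of a linear
map from a space of dimension `∑ᵢ mᵢ nᵢ` to one of dimension `∑_α m_{sα} n_{tα}`, so rank–nullity
gives `dim Hom - dim Ext = ⟨dim M, dim N⟩_Q`; the Tits form is the case `N = M`.
-/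

open Module

theorem LinearMap.finrank_ker_sub_finrank_coker {K V W : Type*} [DivisionRing K]
    [AddCommGroup V] [Module K V] [AddCommGroup W] [Module K W]
    [FiniteDimensional K V] [FiniteDimensional K W] (f : V →ₗ[K] W) :
    (finrank K (LinearMap.ker f) : ℤ) - finrank K (W ⧸ LinearMap.range f) =
      finrank K V - finrank K W := by
  have rank_nullity := f.finrank_range_add_finrank_ker
  have quotient := (LinearMap.range f).finrank_quotient_add_finrank
  omega

theorem finrank_pi_matrix {K ι : Type*} [DivisionRing K] [Fintype ι] (m n : ι → Type*)
    [∀ i, Fintype (m i)] [∀ i, Fintype (n i)] :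
    finrank K (∀ i, Matrix (m i) (n i) K) = ∑ i, Fintype.card (m i) * Fintype.card (n i) := by
  simp [Module.finrank_pi_fintype, Module.finrank_matrix]

theorem eulerForm_dimVec {Q : FinQuiver} (M N : QRep Q) :
    eulerForm Q (dimVec M) (dimVec N) =
      (finrank ℂ (∀ i, Matrix (N.carrier i) (M.carrier i) ℂ) : ℤ) -
        finrank ℂ (∀ a : Q.A, Matrix (N.carrier (Q.t a)) (M.carrier (Q.s a)) ℂ) := by
  simp only [eulerForm, dimVec, finrank_pi_matrix, Nat.cast_sum, Nat.cast_mul, mul_comm]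

theorem eulerForm_eq_finrank_hom_sub_finrank_ext {Q : FinQuiver} (M N : QRep Q) :
    eulerForm Q (dimVec M) (dimVec N) =
      (finrank ℂ (homSpace M N) : ℤ) - finrank ℂ (extSpace M N) := by
  rw [eulerForm_dimVec, homSpace, (cmap M N).finrank_ker_sub_finrank_coker]

/-- for a finite-dimensional representation `M` of a finite quiver `Q`,
`q_Q(dim M) = dim End_Q(M) - dim Ext¹_Q(M,M)`. -/
theorem titsForm_eq_end_sub_ext {Q : FinQuiver} (M : QRep Q) :
    titsForm Q (dimVec M) =
      (Module.finrank ℂ (homSpace M M) : ℤ) - Module.finrank ℂ (extSpace M M) :=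
  eulerForm_eq_finrank_hom_sub_finrank_ext M M
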